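/- Let Q be a real-entried matrix of size m × n (viewed in ℂ), and let M : Matrix (Fin m) (Fin n) ℂ, U : Matrix (Fin m) (Fin r) ℂ, Y : Matrix (Fin r) (Fin n) ℂ. Define g = −Uᴴ ⬝ ((Q ∘ Q) ∘ (M − U ⬝ Y)). Let d₁, d₂ : Matrix (Fin r) (Fin n) ℂ with D₁ := ‖Q ∘ (U ⬝ d₁)‖_F² ≠ 0 and D₂ := ‖Q ∘ (U ⬝ d₂)‖_F² ≠ 0, set γᵢ = Re⟨g, dᵢ⟩_F and μᵢ = γᵢ / Dᵢ for i = 1, 2, and let λ ∈ [0, 1]. Then the combined update Y⁺ = Y − (1 − λ)·μ₁ • d₁ − λ·μ₂ • d₂ satisfies (1/2)‖Q ∘ (M − U ⬝ Y⁺)‖_F² ≤ (1/2)‖Q ∘ (M − U ⬝ Y)‖_F² − (1 − λ)·γ₁²/(2D₁) − λ·γ₂²/(2D₂); in particular the weighted cost does not increase under the convexly combined scaled-gradient step. -/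

import Mathlib

/-!
The step is the convex combination `(1 - λ) • Y₁ + λ • Y₂` of the two exact line-search steps
`Yᵢ = Y - μᵢ • dᵢ`. Along a direction the weighted cost is a quadratic in the step size, and at the
minimiser `μᵢ` it equals the cost at `Y` minus `γᵢ² / (2 Dᵢ)`, because `γᵢ = Re⟨g, dᵢ⟩` is minus the
real inner product of the weighted residual `Q ⊙ (M - U Y)` with `Q ⊙ (U dᵢ)` (this uses that `Q` is
real). Convexity of the cost then bounds the cost at the combined step by the convex combination of
the two decreased costs.
-/

open Finset Matrix

/-- Frobenius norm of a complex matrix. -/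
noncomputable def frobNorm {m n : Type*} [Fintype m] [Fintype n]
    (A : Matrix m n ℂ) : ℝ :=
  Real.sqrt (∑ i, ∑ j, ‖A i j‖ ^ 2)

/-- Frobenius inner product of complex matrices. -/
noncomputable def frobInner {m n : Type*} [Fintype m] [Fintype n]
    (A B : Matrix m n ℂ) : ℂ :=
  ∑ i, ∑ j, starRingEnd ℂ (A i j) * B i j

section Frobenius

variable {m n r : Type*} [Fintype m] [Fintype n] [Fintype r]

theorem frobNorm_sq (A : Matrix m n ℂ) : frobNorm A ^ 2 = ∑ i, ∑ j, ‖A i j‖ ^ 2 :=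
  Real.sq_sqrt (by positivity)

theorem frobInner_eq_trace (A B : Matrix m n ℂ) : frobInner A B = trace (Aᴴ * B) := by
  simp only [frobInner, trace, Matrix.diag, mul_apply, conjTranspose_apply, Complex.star_def]
  exact Finset.sum_comm

theorem frobInner_conjTranspose_mul_left (U : Matrix m r ℂ) (A : Matrix m n ℂ)
    (B : Matrix r n ℂ) : frobInner (Uᴴ * A) B = frobInner A (U * B) := by
  rw [frobInner_eq_trace, frobInner_eq_trace, conjTranspose_mul, conjTranspose_conjTranspose,
    Matrix.mul_assoc]

theorem frobInner_hadamard_self_left {Q : Matrix m n ℂ} (hQ : ∀ i j, (Q i j).im = 0)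
    (A B : Matrix m n ℂ) : frobInner ((Q ⊙ Q) ⊙ A) B = frobInner (Q ⊙ A) (Q ⊙ B) := by
  have hQ_conj : ∀ i j, starRingEnd ℂ (Q i j) = Q i j := fun i j =>
    Complex.conj_eq_iff_im.2 (hQ i j)
  simp only [frobInner, hadamard_apply, map_mul, hQ_conj]
  exact Finset.sum_congr rfl fun i _ => Finset.sum_congr rfl fun j _ => by ring

theorem frobNorm_add_ofReal_smul_sq (R S : Matrix m n ℂ) (c : ℝ) :
    frobNorm (R + (c : ℂ) • S) ^ 2 =
      frobNorm R ^ 2 + 2 * c * (frobInner R S).re + c ^ 2 * frobNorm S ^ 2 := by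
  have entry (a b : ℂ) : ‖a + c * b‖ ^ 2 =
      ‖a‖ ^ 2 + 2 * c * (starRingEnd ℂ a * b).re + c ^ 2 * ‖b‖ ^ 2 := by
    simp only [Complex.sq_norm, Complex.normSq_apply, Complex.add_re, Complex.add_im,
      Complex.mul_re, Complex.mul_im, Complex.conj_re, Complex.conj_im, Complex.ofReal_re,
      Complex.ofReal_im]
    ring
  simp only [frobNorm_sq, frobInner, Matrix.add_apply, Matrix.smul_apply, smul_eq_mul, entry,
    Finset.sum_add_distrib, Complex.re_sum, Finset.mul_sum]

theorem frobNorm_add_smul_sq_of_exact_line_search (R S : Matrix m n ℂ) :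
    frobNorm (R + ((-(frobInner R S).re / frobNorm S ^ 2 : ℝ) : ℂ) • S) ^ 2 =
      frobNorm R ^ 2 - (frobInner R S).re ^ 2 / frobNorm S ^ 2 := by
  rw [frobNorm_add_ofReal_smul_sq]
  by_cases hS : frobNorm S ^ 2 = 0
  -- the junk value `x / 0 = 0` makes the step size `0`, and both sides are `‖R‖²`
  · simp [hS]
  · field_simp
    ring

theorem convexOn_frobNorm_sq : ConvexOn ℝ Set.univ (fun A : Matrix m n ℂ => frobNorm A ^ 2) := by
  have entry : ConvexOn ℝ Set.univ (fun z : ℂ => ‖z‖ ^ 2) :=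
    (convexOn_norm convex_univ).pow (fun _ _ => norm_nonneg _) 2
  refine ⟨convex_univ, fun A _ B _ a b ha hb hab => ?_⟩
  simp only [frobNorm_sq, smul_eq_mul, Finset.mul_sum, ← Finset.sum_add_distrib]
  exact Finset.sum_le_sum fun i _ => Finset.sum_le_sum fun j _ =>
    entry.2 trivial trivial ha hb hab

section WeightedCost

variable (Q M : Matrix m n ℂ) (U : Matrix m r ℂ)

noncomputable def weightedCost (Y : Matrix r n ℂ) : ℝ := 1 / 2 * frobNorm (Q ⊙ (M - U * Y)) ^ 2

noncomputable def weightedGrad (Y : Matrix r n ℂ) : Matrix r n ℂ :=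
  -(Uᴴ * ((Q ⊙ Q) ⊙ (M - U * Y)))

theorem convexOn_weightedCost : ConvexOn ℝ Set.univ (weightedCost Q M U) := by
  refine ⟨convex_univ, fun X _ Y _ a b ha hb hab => ?_⟩
  have h_affine : Q ⊙ (M - U * (a • X + b • Y)) =
      a • (Q ⊙ (M - U * X)) + b • (Q ⊙ (M - U * Y)) := by
    have hab' : (a : ℂ) + b = 1 := by exact_mod_cast hab
    ext i j
    simp only [hadamard_apply, Matrix.sub_apply, Matrix.add_apply, Matrix.smul_apply,
      Matrix.mul_add, Matrix.mul_smul, Complex.real_smul]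
    linear_combination -(Q i j * M i j) * hab'
  have h_convex := convexOn_frobNorm_sq.2 (Set.mem_univ (Q ⊙ (M - U * X)))
    (Set.mem_univ (Q ⊙ (M - U * Y))) ha hb hab
  simp only [weightedCost, smul_eq_mul, h_affine] at h_convex ⊢
  linarith

variable {Q}

theorem re_frobInner_weightedGrad (hQ : ∀ i j, (Q i j).im = 0) (Y d : Matrix r n ℂ) :
    (frobInner (weightedGrad Q M U Y) d).re = -(frobInner (Q ⊙ (M - U * Y)) (Q ⊙ (U * d))).re := by
  rw [weightedGrad, ← frobInner_hadamard_self_left hQ, ← frobInner_conjTranspose_mul_left]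
  simp [frobInner]

theorem weightedCost_sub_smul_of_exact_line_search (hQ : ∀ i j, (Q i j).im = 0)
    (Y d : Matrix r n ℂ) :
    weightedCost Q M U
        (Y - (((frobInner (weightedGrad Q M U Y) d).re / frobNorm (Q ⊙ (U * d)) ^ 2 : ℝ) : ℂ) • d) =
      weightedCost Q M U Y -
        (frobInner (weightedGrad Q M U Y) d).re ^ 2 / (2 * frobNorm (Q ⊙ (U * d)) ^ 2) := by
  have h_step (c : ℂ) : Q ⊙ (M - U * (Y - c • d)) = Q ⊙ (M - U * Y) + c • (Q ⊙ (U * d)) := by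
    ext i j
    simp only [hadamard_apply, Matrix.sub_apply, Matrix.add_apply, Matrix.smul_apply,
      Matrix.mul_sub, Matrix.mul_smul, smul_eq_mul]
    ring
  rw [weightedCost, weightedCost, h_step, re_frobInner_weightedGrad M U hQ, neg_sq,
    frobNorm_add_smul_sq_of_exact_line_search]
  ring

end WeightedCost

end Frobenius

theorem combined_step_decrease_general {m n r : ℕ}
    (Q : Matrix (Fin m) (Fin n) ℂ) (hQ : ∀ i j, (Q i j).im = 0)
    (M : Matrix (Fin m) (Fin n) ℂ) (U : Matrix (Fin m) (Fin r) ℂ)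
    (Y : Matrix (Fin r) (Fin n) ℂ)
    (g : Matrix (Fin r) (Fin n) ℂ)
    (hg : g = -(Uᴴ * ((Q ⊙ Q) ⊙ (M - U * Y))))
    (d₁ d₂ : Matrix (Fin r) (Fin n) ℂ)
    (D₁ D₂ : ℝ)
    (hD₁ : D₁ = frobNorm (Q ⊙ (U * d₁)) ^ 2)
    (hD₂ : D₂ = frobNorm (Q ⊙ (U * d₂)) ^ 2)
    (γ₁ γ₂ : ℝ) (hγ₁ : γ₁ = (frobInner g d₁).re) (hγ₂ : γ₂ = (frobInner g d₂).re)
    (μ₁ μ₂ : ℝ) (hμ₁ : μ₁ = γ₁ / D₁) (hμ₂ : μ₂ = γ₂ / D₂)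
    (lam : ℝ) (hlam : lam ∈ Set.Icc (0 : ℝ) 1)
    (Yplus : Matrix (Fin r) (Fin n) ℂ)
    (hYplus : Yplus = Y - (((1 - lam) * μ₁ : ℝ) : ℂ) • d₁ - ((lam * μ₂ : ℝ) : ℂ) • d₂) :
    (1 / 2) * frobNorm (Q ⊙ (M - U * Yplus)) ^ 2 ≤
      (1 / 2) * frobNorm (Q ⊙ (M - U * Y)) ^ 2 -
        (1 - lam) * γ₁ ^ 2 / (2 * D₁) - lam * γ₂ ^ 2 / (2 * D₂) := by
  have h_step₁ : weightedCost Q M U (Y - (μ₁ : ℂ) • d₁) =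
      weightedCost Q M U Y - γ₁ ^ 2 / (2 * D₁) := by
    subst_vars
    exact weightedCost_sub_smul_of_exact_line_search M U hQ Y d₁
  have h_step₂ : weightedCost Q M U (Y - (μ₂ : ℂ) • d₂) =
      weightedCost Q M U Y - γ₂ ^ 2 / (2 * D₂) := by
    subst_vars
    exact weightedCost_sub_smul_of_exact_line_search M U hQ Y d₂
  have h_split : Yplus = (1 - lam) • (Y - (μ₁ : ℂ) • d₁) + lam • (Y - (μ₂ : ℂ) • d₂) := by
    rw [hYplus, ← Complex.coe_smul, ← Complex.coe_smul]
    push_cast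
    module
  calc (1 / 2) * frobNorm (Q ⊙ (M - U * Yplus)) ^ 2
      = weightedCost Q M U ((1 - lam) • (Y - (μ₁ : ℂ) • d₁) + lam • (Y - (μ₂ : ℂ) • d₂)) := by
        rw [← h_split, weightedCost]
    _ ≤ (1 - lam) * weightedCost Q M U (Y - (μ₁ : ℂ) • d₁) +
          lam * weightedCost Q M U (Y - (μ₂ : ℂ) • d₂) :=
        (convexOn_weightedCost Q M U).2 trivial trivial (sub_nonneg.2 hlam.2) hlam.1 (by ring)
    _ = _ := by
        rw [h_step₁, h_step₂, weightedCost]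
        ring

/-- The weighted cost does not increase under the convexly combined
scaled-gradient step in `Y`. -/
theorem combined_step_decrease {m n r : ℕ}
    (Q : Matrix (Fin m) (Fin n) ℂ) (hQ : ∀ i j, (Q i j).im = 0)
    (M : Matrix (Fin m) (Fin n) ℂ) (U : Matrix (Fin m) (Fin r) ℂ)
    (Y : Matrix (Fin r) (Fin n) ℂ)
    (g : Matrix (Fin r) (Fin n) ℂ)
    (hg : g = -(Uᴴ * ((Q ⊙ Q) ⊙ (M - U * Y))))
    (d₁ d₂ : Matrix (Fin r) (Fin n) ℂ)
    (D₁ D₂ : ℝ)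
    (hD₁ : D₁ = frobNorm (Q ⊙ (U * d₁)) ^ 2) (hD₁0 : D₁ ≠ 0)
    (hD₂ : D₂ = frobNorm (Q ⊙ (U * d₂)) ^ 2) (hD₂0 : D₂ ≠ 0)
    (γ₁ γ₂ : ℝ) (hγ₁ : γ₁ = (frobInner g d₁).re) (hγ₂ : γ₂ = (frobInner g d₂).re)
    (μ₁ μ₂ : ℝ) (hμ₁ : μ₁ = γ₁ / D₁) (hμ₂ : μ₂ = γ₂ / D₂)
    (lam : ℝ) (hlam : lam ∈ Set.Icc (0 : ℝ) 1)
    (Yplus : Matrix (Fin r) (Fin n) ℂ)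
    (hYplus : Yplus = Y - (((1 - lam) * μ₁ : ℝ) : ℂ) • d₁ - ((lam * μ₂ : ℝ) : ℂ) • d₂) :
    (1 / 2) * frobNorm (Q ⊙ (M - U * Yplus)) ^ 2 ≤
      (1 / 2) * frobNorm (Q ⊙ (M - U * Y)) ^ 2 -
        (1 - lam) * γ₁ ^ 2 / (2 * D₁) - lam * γ₂ ^ 2 / (2 * D₂) :=
  combined_step_decrease_general Q hQ M U Y g hg d₁ d₂ D₁ D₂ hD₁ hD₂ γ₁ γ₂ hγ₁ hγ₂ μ₁ μ₂ hμ₁ hμ₂ lam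
    hlam Yplus hYplus
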